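/- arXiv:0711.0185 — 6 statements merged into one kernel-verified Lean document; each statement's English description precedes it below -/
import Mathlib

section
/- Let q: 𝔽_p^n → 𝔽_p be given by q(x) = xᵀMx + bᵀx where M is a symmetric matrix of rank r over 𝔽_p (p odd) and b ∈ 𝔽_p^n. Then |𝔼_{x ∈ 𝔽_p^n} ω^{q(x)}| ≤ p^{-r/2}, with equality when b = 0. -/
/-!
Write `S = ∑ₓ ψ(Q x)` with `Q x = xᵀMx + bᵀx`. Expanding `S * conj S = ∑_{x,y} ψ(Q x - Q y)` and
substituting `x = y + h`, symmetry of `M` gives `Q (h + y) - Q y = Q h + (2Mh)ᵀy`, so the inner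
sum over `y` is a complete character sum of a linear form: it is `#F ^ n` when `2Mh = 0` and
vanishes otherwise. As `2` is invertible, only `h ∈ ker M` survive, and there `Q h = bᵀh`.
Hence `‖S‖² = #F ^ n * ‖∑_{h ∈ ker M} ψ(bᵀh)‖ ≤ #F ^ n * #F ^ (n - rank M)`, with equality
when `b = 0`.
-/

open Complex Finset Matrix ComplexConjugate

lemma Real.rpow_neg_div_two_eq_sqrt_div {q : ℝ} (hq : 0 < q) {r n : ℕ} (hrn : r ≤ n) :
    q ^ (-(r : ℝ) / 2) = √(q ^ n * q ^ (n - r)) / q ^ n := by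
  rw [Real.sqrt_eq_rpow, ← pow_add, ← Real.rpow_natCast, ← Real.rpow_mul hq.le,
    ← Real.rpow_natCast q n, ← Real.rpow_sub hq]
  congr 1
  push_cast [hrn]
  ring

namespace AddChar

lemma map_sum_eq_prod {A M ι : Type*} [AddCommMonoid A] [CommMonoid M] (ψ : AddChar A M)
    (s : Finset ι) (f : ι → A) : ψ (∑ i ∈ s, f i) = ∏ i ∈ s, ψ (f i) := by
  have := map_prod ψ.toMonoidHom (fun i => Multiplicative.ofAdd (f i)) s
  rwa [← ofAdd_sum, toMonoidHom_apply] at this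

lemma sum_apply_dotProduct {R R' ι : Type*} [CommRing R] [Fintype R] [DecidableEq R]
    [CommRing R'] [IsDomain R'] [Fintype ι] [DecidableEq ι] {ψ : AddChar R R'}
    (hψ : ψ.IsPrimitive) (c : ι → R) :
    ∑ x : ι → R, ψ (c ⬝ᵥ x) = if c = 0 then (Fintype.card R : R') ^ Fintype.card ι else 0 := by
  calc ∑ x : ι → R, ψ (c ⬝ᵥ x) = ∑ x : ι → R, ∏ i, ψ (x i * c i) := by
        simp only [dotProduct, map_sum_eq_prod, mul_comm]
    _ = ∏ i, ∑ t, ψ (t * c i) := (Fintype.prod_sum fun i t => ψ (t * c i)).symm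
    _ = ∏ i, if c i = 0 then (Fintype.card R : R') else 0 := by
      simp only [sum_mulShift _ hψ, Nat.cast_ite, Nat.cast_zero]
    _ = _ := by simp only [Fintype.prod_ite_zero, funext_iff, Pi.zero_apply, prod_const, card_univ]

end AddChar

lemma Matrix.IsSymm.add_dotProduct_mulVec_add {R ι : Type*} [CommRing R] [Fintype ι]
    {M : Matrix ι ι R} (hM : M.IsSymm) (x y : ι → R) :
    (x + y) ⬝ᵥ M *ᵥ (x + y) = x ⬝ᵥ M *ᵥ x + y ⬝ᵥ M *ᵥ y + ((2 : R) • M *ᵥ x) ⬝ᵥ y := by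
  have : x ⬝ᵥ M *ᵥ y = (M *ᵥ x) ⬝ᵥ y := by
    rw [dotProduct_mulVec, ← mulVec_transpose, hM.eq]
  simp only [mulVec_add, dotProduct_add, add_dotProduct, smul_dotProduct, this,
    dotProduct_comm y (M *ᵥ x), smul_eq_mul]
  ring

lemma Matrix.card_filter_mulVec_eq_zero {F m n : Type*} [Field F] [Fintype F] [DecidableEq F]
    [Fintype m] [Fintype n] [DecidableEq n] (M : Matrix m n F) :
    #{v : n → F | M *ᵥ v = 0} = Fintype.card F ^ (Fintype.card n - M.rank) := by
  classical
  have hrank := LinearMap.finrank_range_add_finrank_ker M.mulVecLin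
  rw [Module.finrank_fintype_fun_eq_card] at hrank
  calc #{v : n → F | M *ᵥ v = 0} = Fintype.card (LinearMap.ker M.mulVecLin) :=
        (Fintype.card_subtype _).symm.trans <| Fintype.card_congr <|
          Equiv.subtypeEquivRight fun v => (LinearMap.mem_ker (f := M.mulVecLin) (y := v)).symm
    _ = _ := by
      rw [Module.card_eq_pow_finrank (K := F), Matrix.rank]
      congr 1
      omega

section QuadraticCharacterSum

variable {F ι K : Type*} [Field F] [Fintype F] [DecidableEq F] [Fintype ι] [DecidableEq ι]
  [RCLike K] {ψ : AddChar F K} {M : Matrix ι ι F}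

theorem AddChar.sum_quadratic_mul_conj (hF : ringChar F ≠ 2) (hψ : ψ.IsPrimitive)
    (hM : M.IsSymm) (b : ι → F) :
    (∑ x, ψ (x ⬝ᵥ M *ᵥ x + b ⬝ᵥ x)) * conj (∑ x, ψ (x ⬝ᵥ M *ᵥ x + b ⬝ᵥ x)) =
      (Fintype.card F : K) ^ Fintype.card ι * ∑ h with M *ᵥ h = 0, ψ (b ⬝ᵥ h) := by
  set Q := fun x : ι → F => x ⬝ᵥ M *ᵥ x + b ⬝ᵥ x
  have hQ_add (h y : ι → F) : Q (h + y) - Q y = Q h + ((2 : F) • M *ᵥ h) ⬝ᵥ y := by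
    simp only [Q, hM.add_dotProduct_mulVec_add, dotProduct_add]
    ring
  calc (∑ x, ψ (Q x)) * conj (∑ y, ψ (Q y)) = ∑ y, ∑ x, ψ (Q x - Q y) := by
        simp only [map_sum, sum_mul_sum, sub_eq_add_neg, map_add_eq_mul, map_neg_eq_conj]
        exact sum_comm
    _ = ∑ y, ∑ h, ψ (Q (h + y) - Q y) :=
        sum_congr rfl fun y _ => (Equiv.sum_comp (Equiv.addRight y) _).symm
    _ = ∑ h, ψ (Q h) * ∑ y, ψ (((2 : F) • M *ᵥ h) ⬝ᵥ y) := by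
        rw [sum_comm]
        simp only [hQ_add, map_add_eq_mul, mul_sum]
    _ = ∑ h, if M *ᵥ h = 0 then (Fintype.card F : K) ^ Fintype.card ι * ψ (b ⬝ᵥ h) else 0 := by
        simp only [AddChar.sum_apply_dotProduct hψ, smul_eq_zero, Ring.two_ne_zero hF, false_or]
        refine sum_congr rfl fun h _ => ?_
        split_ifs with hh <;> simp [Q, hh, mul_comm]
    _ = _ := by simp only [sum_filter, mul_sum, mul_ite, mul_zero]

theorem AddChar.norm_sum_quadratic_sq (hF : ringChar F ≠ 2) (hψ : ψ.IsPrimitive)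
    (hM : M.IsSymm) (b : ι → F) :
    ‖∑ x, ψ (x ⬝ᵥ M *ᵥ x + b ⬝ᵥ x)‖ ^ 2 =
      (Fintype.card F : ℝ) ^ Fintype.card ι * ‖∑ h with M *ᵥ h = 0, ψ (b ⬝ᵥ h)‖ := by
  have := congrArg norm (sum_quadratic_mul_conj hF hψ hM b)
  rwa [norm_mul, RCLike.norm_conj, norm_mul, norm_pow, RCLike.norm_natCast, ← sq] at this

theorem AddChar.norm_sum_quadratic_sq_le (hF : ringChar F ≠ 2) (hψ : ψ.IsPrimitive)
    (hM : M.IsSymm) (b : ι → F) :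
    ‖∑ x, ψ (x ⬝ᵥ M *ᵥ x + b ⬝ᵥ x)‖ ^ 2 ≤
      (Fintype.card F : ℝ) ^ Fintype.card ι * Fintype.card F ^ (Fintype.card ι - M.rank) := by
  rw [norm_sum_quadratic_sq hF hψ hM]
  gcongr
  calc ‖∑ h with M *ᵥ h = 0, ψ (b ⬝ᵥ h)‖ ≤ #{h : ι → F | M *ᵥ h = 0} :=
        (norm_sum_le _ _).trans_eq (by simp)
    _ = _ := by rw [M.card_filter_mulVec_eq_zero, Nat.cast_pow]

theorem AddChar.norm_sum_quadratic_form_sq (hF : ringChar F ≠ 2) (hψ : ψ.IsPrimitive)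
    (hM : M.IsSymm) :
    ‖∑ x, ψ (x ⬝ᵥ M *ᵥ x)‖ ^ 2 =
      (Fintype.card F : ℝ) ^ Fintype.card ι * Fintype.card F ^ (Fintype.card ι - M.rank) := by
  simpa [M.card_filter_mulVec_eq_zero] using norm_sum_quadratic_sq hF hψ hM 0

theorem AddChar.norm_sum_quadratic_div_card_pow_le (hF : ringChar F ≠ 2) (hψ : ψ.IsPrimitive)
    (hM : M.IsSymm) (b : ι → F) :
    ‖(∑ x, ψ (x ⬝ᵥ M *ᵥ x + b ⬝ᵥ x)) / (Fintype.card F : K) ^ Fintype.card ι‖ ≤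
      (Fintype.card F : ℝ) ^ (-(M.rank : ℝ) / 2) := by
  rw [Real.rpow_neg_div_two_eq_sqrt_div (Nat.cast_pos.mpr Fintype.card_pos) M.rank_le_card_width,
    norm_div, norm_pow, RCLike.norm_natCast, ← Real.sqrt_sq (norm_nonneg _)]
  gcongr
  exact norm_sum_quadratic_sq_le hF hψ hM b

theorem AddChar.norm_sum_quadratic_form_div_card_pow (hF : ringChar F ≠ 2) (hψ : ψ.IsPrimitive)
    (hM : M.IsSymm) :
    ‖(∑ x, ψ (x ⬝ᵥ M *ᵥ x)) / (Fintype.card F : K) ^ Fintype.card ι‖ =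
      (Fintype.card F : ℝ) ^ (-(M.rank : ℝ) / 2) := by
  rw [Real.rpow_neg_div_two_eq_sqrt_div (Nat.cast_pos.mpr Fintype.card_pos) M.rank_le_card_width,
    norm_div, norm_pow, RCLike.norm_natCast, ← Real.sqrt_sq (norm_nonneg _),
    norm_sum_quadratic_form_sq hF hψ hM]

end QuadraticCharacterSum

/-- Gauss sum for a quadratic `q(x) = xᵀMx + bᵀx` with `M` symmetric of rank `r`:
`|𝔼_x ω^{q(x)}| ≤ p^{-r/2}`, with equality when `b = 0`. -/
theorem gauss_sum_rank (p : ℕ) [Fact p.Prime] (hp : Odd p) (n r : ℕ)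
    (M : Matrix (Fin n) (Fin n) (ZMod p)) (hM : M.IsSymm) (hr : M.rank = r)
    (b : Fin n → ZMod p) :
    ‖(∑ x : Fin n → ZMod p,
        Complex.exp (2 * Real.pi * I / p) ^
          ((∑ i, ∑ j, x i * M i j * x j) + ∑ i, b i * x i).val) /
      ((p : ℂ) ^ n)‖ ≤ (p : ℝ) ^ (-(r : ℝ) / 2) ∧
    (b = 0 →
      ‖(∑ x : Fin n → ZMod p,
          Complex.exp (2 * Real.pi * I / p) ^
            ((∑ i, ∑ j, x i * M i j * x j) + ∑ i, b i * x i).val) /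
        ((p : ℂ) ^ n)‖ = (p : ℝ) ^ (-(r : ℝ) / 2)) := by
  have hω := Complex.isPrimitiveRoot_exp p (Fact.out : p.Prime).ne_zero
  have hψ := AddChar.zmodChar_primitive_of_primitive_root p hω
  have hp2 : ringChar (ZMod p) ≠ 2 := by
    rw [ZMod.ringChar_zmod_n]
    rintro rfl
    exact Nat.not_odd_iff_even.mpr even_two hp
  have hsum (x : Fin n → ZMod p) :
      (∑ i, ∑ j, x i * M i j * x j) + ∑ i, b i * x i = x ⬝ᵥ M *ᵥ x + b ⬝ᵥ x := by
    simp only [dotProduct, mulVec, mul_sum, mul_assoc]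
  simp only [hsum, ← AddChar.zmodChar_apply hω.pow_eq_one, ← hr]
  refine ⟨?_, ?_⟩
  · simpa using AddChar.norm_sum_quadratic_div_card_pow_le hp2 hψ hM b
  · rintro rfl
    simpa using AddChar.norm_sum_quadratic_form_div_card_pow hp2 hψ hM
end

section
/- Let f: 𝔽_p^n → ℝ, let B₁ be the σ-algebra generated by the level sets of a surjective linear map Γ₁: 𝔽_p^n → 𝔽_p^{d₁}, and let g = 𝔼(f | B₁) be the conditional expectation. Then ‖f‖_{U²}⁴ = ‖g‖_{U²}⁴ + ‖f − g‖_{U²}⁴; in particular ‖g‖_{U²} ≤ ‖f‖_{U²}. -/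
/-!
Write `f = g + h` with `h = f - g`. Since `h` has mean zero on every fiber of `Γ₁`, it is
orthogonal to every function factoring through `Γ₁`; translates of `g` factor through `Γ₁`,
so the autocorrelation of `f` is the sum of the autocorrelations of `g` and `h`. The
autocorrelation of `g` factors through `Γ₁` as well, hence is orthogonal to that of `h`
(unfolding, this is the orthogonality of `h` once more), and `‖·‖_{U²}⁴` is the squared
`ℓ²`-norm of the autocorrelation.
-/

open Finset

/-- `‖f‖_{U²}⁴ = 𝔼_{x,h,h'} f(x)f(x+h)f(x+h')f(x+h+h')`. -/
noncomputable def U2pow4 {V : Type*} [AddCommGroup V] [Fintype V] (f : V → ℝ) : ℝ :=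
  (∑ x : V, ∑ h : V, ∑ h' : V, f x * f (x + h) * f (x + h') * f (x + h + h')) /
    (Fintype.card V : ℝ) ^ 3

section Correlation

variable {V : Type*} [AddCommGroup V] [Fintype V]

noncomputable def corr (u v : V → ℝ) (k : V) : ℝ := ∑ a, u a * v (a + k)

lemma corr_add_left (u u' v : V → ℝ) : corr (u + u') v = corr u v + corr u' v := by
  ext k
  simp only [corr, Pi.add_apply, add_mul, sum_add_distrib]

lemma corr_add_right (u v v' : V → ℝ) : corr u (v + v') = corr u v + corr u v' := by
  ext k
  simp only [corr, Pi.add_apply, mul_add, sum_add_distrib]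

lemma U2pow4_eq_sum_corr_sq (w : V → ℝ) :
    U2pow4 w = (∑ k, corr w w k ^ 2) / (Fintype.card V : ℝ) ^ 3 := by
  unfold U2pow4
  congr 1
  rw [sum_comm]
  refine sum_congr rfl fun k _ => ?_
  rw [corr, sq, sum_mul_sum]
  refine sum_congr rfl fun x _ => ?_
  rw [← Equiv.sum_comp (Equiv.addLeft x) fun b => w x * w (x + k) * (w b * w (b + k))]
  refine sum_congr rfl fun h' _ => ?_
  rw [Equiv.coe_addLeft, add_right_comm x k h']
  ring

lemma U2pow4_nonneg (w : V → ℝ) : 0 ≤ U2pow4 w := by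
  rw [U2pow4_eq_sum_corr_sq]
  positivity

end Correlation

section Orthogonality

variable {V W : Type*} [AddCommGroup V] [Fintype V] [AddCommGroup W]
  {Γ : V →+ W} {h : V → ℝ}

lemma corr_comp_left_eq_zero (hh : ∀ φ : W → ℝ, ∑ x, h x * φ (Γ x) = 0) (G : W → ℝ) :
    corr (G ∘ Γ) h = 0 := by
  ext k
  rw [corr, ← (Equiv.subRight k).sum_comp]
  simpa [mul_comm] using hh fun β => G (β - Γ k)

lemma corr_comp_right_eq_zero (hh : ∀ φ : W → ℝ, ∑ x, h x * φ (Γ x) = 0) (G : W → ℝ) :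
    corr h (G ∘ Γ) = 0 := by
  ext k
  simpa [corr] using hh fun β => G (β + Γ k)

lemma corr_comp_eq_comp (G : W → ℝ) :
    corr (G ∘ Γ) (G ∘ Γ) = (fun β => ∑ a, G (Γ a) * G (Γ a + β)) ∘ Γ := by
  ext k
  simp [corr]

lemma sum_corr_mul_comp_eq_zero (hh : ∀ φ : W → ℝ, ∑ x, h x * φ (Γ x) = 0) (C : W → ℝ) :
    ∑ k, corr h h k * C (Γ k) = 0 := by
  calc ∑ k, corr h h k * C (Γ k)
      = ∑ a, h a * ∑ b, h b * C (Γ b - Γ a) := by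
        simp only [corr, sum_mul, mul_sum]
        rw [sum_comm]
        refine sum_congr rfl fun a _ => ?_
        rw [← Equiv.sum_comp (Equiv.addLeft a) fun b => h a * (h b * C (Γ b - Γ a))]
        refine sum_congr rfl fun k _ => ?_
        rw [Equiv.coe_addLeft, map_add, add_sub_cancel_left, mul_assoc]
    _ = 0 := sum_eq_zero fun a _ => by rw [hh fun β => C (β - Γ a), mul_zero]

theorem U2pow4_comp_add_of_orthogonal (hh : ∀ φ : W → ℝ, ∑ x, h x * φ (Γ x) = 0)
    (G : W → ℝ) : U2pow4 (G ∘ Γ + h) = U2pow4 (G ∘ Γ) + U2pow4 h := by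
  have hcorr : corr (G ∘ Γ + h) (G ∘ Γ + h) = corr (G ∘ Γ) (G ∘ Γ) + corr h h := by
    rw [corr_add_left, corr_add_right, corr_add_right, corr_comp_left_eq_zero hh,
      corr_comp_right_eq_zero hh, add_zero, zero_add]
  have hcross : ∑ k, corr (G ∘ Γ) (G ∘ Γ) k * corr h h k = 0 := by
    rw [corr_comp_eq_comp]
    simp_rw [Function.comp_apply, mul_comm _ (corr h h _)]
    exact sum_corr_mul_comp_eq_zero hh fun β => ∑ a, G (Γ a) * G (Γ a + β)
  have hsum : ∑ k, (corr (G ∘ Γ) (G ∘ Γ) k + corr h h k) ^ 2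
      = ∑ k, corr (G ∘ Γ) (G ∘ Γ) k ^ 2 + ∑ k, corr h h k ^ 2 := by
    simp only [add_sq', sum_add_distrib, mul_assoc, ← mul_sum, hcross, mul_zero, add_zero]
  rw [U2pow4_eq_sum_corr_sq, U2pow4_eq_sum_corr_sq, U2pow4_eq_sum_corr_sq, hcorr]
  simp only [Pi.add_apply]
  rw [hsum, add_div]

end Orthogonality

section FiberAverage

open scoped BigOperators

variable {V W : Type*} [Fintype V] [DecidableEq W]

noncomputable def fiberAvg (Γ : V → W) (f : V → ℝ) (β : W) : ℝ :=
  𝔼 y ∈ univ.filter (fun y => Γ y = β), f y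

lemma sum_sub_fiberAvg_mul_comp_eq_zero (Γ : V → W) (f : V → ℝ) (φ : W → ℝ) :
    ∑ x, (f x - fiberAvg Γ f (Γ x)) * φ (Γ x) = 0 := by
  rw [← sum_fiberwise_of_maps_to fun x _ => mem_image_of_mem Γ (mem_univ x)]
  refine sum_eq_zero fun β _ => ?_
  calc ∑ x ∈ univ.filter (fun x => Γ x = β), (f x - fiberAvg Γ f (Γ x)) * φ (Γ x)
      = ∑ x ∈ univ.filter (fun x => Γ x = β), (f x - fiberAvg Γ f β) * φ β :=
        sum_congr rfl fun x hx => by rw [(mem_filter.1 hx).2]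
    _ = (∑ x ∈ univ.filter (fun x => Γ x = β), f x
          - #(univ.filter (fun x => Γ x = β)) * fiberAvg Γ f β) * φ β := by
        rw [← sum_mul, sum_sub_distrib, sum_const, nsmul_eq_mul]
    _ = 0 := by rw [fiberAvg, card_mul_expect, sub_self, zero_mul]

end FiberAverage

theorem u2_pythagoras_general (p : ℕ) [Fact p.Prime] (n d₁ : ℕ)
    (f : (Fin n → ZMod p) → ℝ)
    (Γ₁ : (Fin n → ZMod p) →ₗ[ZMod p] (Fin d₁ → ZMod p))
    (g : (Fin n → ZMod p) → ℝ)
    (hg : ∀ x, g x = (∑ y ∈ Finset.univ.filter (fun y => Γ₁ y = Γ₁ x), f y) /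
      ((Finset.univ.filter (fun y => Γ₁ y = Γ₁ x)).card : ℝ)) :
    U2pow4 f = U2pow4 g + U2pow4 (f - g) ∧ U2pow4 g ≤ U2pow4 f := by
  have hgΓ : g = fiberAvg Γ₁ f ∘ Γ₁.toAddMonoidHom := by
    ext x
    rw [hg, Function.comp_apply, fiberAvg, expect_eq_sum_div_card]
    rfl
  have horth : ∀ φ : (Fin d₁ → ZMod p) → ℝ, ∑ x, (f - g) x * φ (Γ₁.toAddMonoidHom x) = 0 := by
    subst hgΓ
    exact sum_sub_fiberAvg_mul_comp_eq_zero Γ₁ f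
  have hsplit := U2pow4_comp_add_of_orthogonal horth (fiberAvg Γ₁ f)
  rw [← hgΓ, add_sub_cancel] at hsplit
  exact ⟨hsplit, hsplit ▸ le_add_of_nonneg_right (U2pow4_nonneg _)⟩

/-- Pythagoras for the `U²`-norm under projection to a linear factor: if `g` is the
conditional expectation of `f` with respect to the level sets of a surjective linear map
`Γ₁`, then `‖f‖_{U²}⁴ = ‖g‖_{U²}⁴ + ‖f−g‖_{U²}⁴`; in particular `‖g‖_{U²} ≤ ‖f‖_{U²}`. -/
theorem u2_pythagoras (p : ℕ) [Fact p.Prime] (n d₁ : ℕ)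
    (f : (Fin n → ZMod p) → ℝ)
    (Γ₁ : (Fin n → ZMod p) →ₗ[ZMod p] (Fin d₁ → ZMod p))
    (hΓ₁ : Function.Surjective Γ₁)
    (g : (Fin n → ZMod p) → ℝ)
    (hg : ∀ x, g x = (∑ y ∈ Finset.univ.filter (fun y => Γ₁ y = Γ₁ x), f y) /
      ((Finset.univ.filter (fun y => Γ₁ y = Γ₁ x)).card : ℝ)) :
    U2pow4 f = U2pow4 g + U2pow4 (f - g) ∧ U2pow4 g ≤ U2pow4 f :=
  u2_pythagoras_general p n d₁ f Γ₁ g hg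
end

section
/- Let G be a finite abelian group of odd order, let A ⊆ G have density α, and let f = 1_A − α be the balanced function. Then |𝔼_{x,d ∈ G} 1_A(x)1_A(x+d)1_A(x+2d) − α³| ≤ 3‖f‖_{U²}. -/
open Finset

/-!
Writing `1_A = f + α`, the count of 3-APs is trilinear, and every term containing the constant `α`
factors through `∑ f = 0` (for the middle slot because `d ↦ 2d` is a bijection), so the
normalized count minus `α³` is the 3-AP average of `f` alone. Substituting `x = y - d`, that
average is `𝔼_y f(y) g(y)` with `g(y) = 𝔼_d f(y-d) f(y+d)`, and `𝔼 g² = ‖f‖_{U²}⁴` (again since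
`2` is invertible). Cauchy–Schwarz then bounds the error by `‖f‖_{U²}²`, which is at most
`‖f‖_{U²}` because `|f| ≤ 1`.
-/

section ThreeAP

variable {G : Type*} [AddCommGroup G] [Fintype G]

def threeAPSum (f₁ f₂ f₃ : G → ℝ) : ℝ :=
  ∑ x : G, ∑ d : G, f₁ x * f₂ (x + d) * f₃ (x + d + d)

lemma sum_add_left_eq_sum (f : G → ℝ) (t : G) : ∑ x : G, f (t + x) = ∑ x : G, f x :=
  Equiv.sum_comp (Equiv.addLeft t) f

lemma bijective_add_self_of_odd_card (hodd : Odd (Fintype.card G)) :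
    Function.Bijective (fun x : G => x + x) := by
  have h2 : (Nat.card G).Coprime 2 := by
    rw [Nat.card_eq_fintype_card]; exact hodd.coprime_two_right
  simpa [two_nsmul] using h2.nsmul_right_bijective

lemma sum_add_add_self_of_odd_card (hodd : Odd (Fintype.card G)) (f : G → ℝ) (t : G) :
    ∑ d : G, f (t + d + d) = ∑ x : G, f x := by
  rw [← sum_add_left_eq_sum f t]
  exact Fintype.sum_bijective _ (bijective_add_self_of_odd_card hodd) _ _
    fun d => by rw [add_assoc]

lemma threeAPSum_add_left (f g h k : G → ℝ) :
    threeAPSum (f + g) h k = threeAPSum f h k + threeAPSum g h k := by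
  simp only [threeAPSum, Pi.add_apply, add_mul, sum_add_distrib]

lemma threeAPSum_add_mid (f g h k : G → ℝ) :
    threeAPSum f (g + h) k = threeAPSum f g k + threeAPSum f h k := by
  simp only [threeAPSum, Pi.add_apply, mul_add, add_mul, sum_add_distrib]

lemma threeAPSum_add_right (f g h k : G → ℝ) :
    threeAPSum f g (h + k) = threeAPSum f g h + threeAPSum f g k := by
  simp only [threeAPSum, Pi.add_apply, mul_add, sum_add_distrib]

lemma threeAPSum_eq_sum_mul (f g h : G → ℝ) :
    threeAPSum f g h = ∑ y : G, g y * ∑ d : G, f (y - d) * h (y + d) := by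
  simp_rw [threeAPSum, mul_sum]
  rw [sum_comm, sum_comm (f := fun y d => g y * (f (y - d) * h (y + d)))]
  refine sum_congr rfl fun d _ => ?_
  refine Fintype.sum_equiv (Equiv.addRight d) _ _ fun x => ?_
  simp only [Equiv.coe_addRight, add_sub_cancel_right]
  ring

lemma threeAPSum_const_left (c : ℝ) (g h : G → ℝ) :
    threeAPSum (fun _ => c) g h = c * (∑ x, g x) * ∑ x, h x := by
  rw [threeAPSum_eq_sum_mul, mul_comm c, mul_assoc, sum_mul]
  refine sum_congr rfl fun y _ => ?_
  rw [← mul_sum, sum_add_left_eq_sum]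

lemma threeAPSum_const_mid (hodd : Odd (Fintype.card G)) (c : ℝ) (g h : G → ℝ) :
    threeAPSum g (fun _ => c) h = c * (∑ x, g x) * ∑ x, h x := by
  rw [threeAPSum, mul_assoc, sum_mul, mul_sum]
  refine sum_congr rfl fun x _ => ?_
  rw [← sum_add_add_self_of_odd_card hodd h x, mul_sum, mul_sum]
  exact sum_congr rfl fun _ _ => by ring

lemma threeAPSum_const_right (c : ℝ) (g h : G → ℝ) :
    threeAPSum g h (fun _ => c) = c * (∑ x, g x) * ∑ x, h x := by
  rw [threeAPSum, mul_assoc, sum_mul, mul_sum]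
  refine sum_congr rfl fun x _ => ?_
  rw [← sum_add_left_eq_sum h x, mul_sum, mul_sum]
  exact sum_congr rfl fun _ _ => by ring

lemma threeAPSum_add_const (hodd : Odd (Fintype.card G)) {f : G → ℝ}
    (hf : ∑ x, f x = 0) (c : ℝ) :
    threeAPSum (f + fun _ => c) (f + fun _ => c) (f + fun _ => c) =
      threeAPSum f f f + c ^ 3 * (Fintype.card G : ℝ) ^ 2 := by
  simp only [threeAPSum_add_left, threeAPSum_add_mid, threeAPSum_add_right,
    threeAPSum_const_left, threeAPSum_const_mid hodd, threeAPSum_const_right,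
    Pi.add_apply, sum_add_distrib, hf, sum_const, card_univ, nsmul_eq_mul]
  ring

lemma sum_sq_sum_mul_sub_add_eq_U2sum (hodd : Odd (Fintype.card G)) (f : G → ℝ) :
    ∑ y : G, (∑ d : G, f (y - d) * f (y + d)) ^ 2 =
      ∑ x : G, ∑ h : G, ∑ h' : G, f x * f (x + h) * f (x + h') * f (x + h + h') := by
  have hbij : Function.Bijective
      fun p : G × G × G => (p.1 - p.2.1, p.2.1 - p.2.2, p.2.1 + p.2.2) := by
    rw [← Finite.injective_iff_bijective]
    rintro ⟨y, d, d'⟩ ⟨z, e, e'⟩ heq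
    simp only [Prod.mk.injEq] at heq
    obtain ⟨hy, hdiff, hsum⟩ := heq
    have hd : d = e := (bijective_add_self_of_odd_card hodd).injective <| by
      calc d + d = d - d' + (d + d') := by abel
        _ = e - e' + (e + e') := by rw [hdiff, hsum]
        _ = e + e := by abel
    subst hd
    simp [add_left_cancel hsum, sub_left_injective hy]
  calc ∑ y : G, (∑ d : G, f (y - d) * f (y + d)) ^ 2
      = ∑ p : G × G × G, f (p.1 - p.2.1) * f (p.1 + p.2.1) *
          (f (p.1 - p.2.2) * f (p.1 + p.2.2)) := by
        simp_rw [sq, sum_mul_sum, Fintype.sum_prod_type]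
    _ = ∑ p : G × G × G, f p.1 * f (p.1 + p.2.1) * f (p.1 + p.2.2) *
          f (p.1 + p.2.1 + p.2.2) := by
        refine Fintype.sum_bijective _ hbij _ _ fun ⟨y, d, d'⟩ => ?_
        simp only [sub_add_sub_cancel, sub_add_add_cancel,
          show y - d + (d + d') = y + d' by abel]
        ring
    _ = _ := by simp_rw [Fintype.sum_prod_type]

lemma U2pow4_le_one {f : G → ℝ} (hf : ∀ x, |f x| ≤ 1) : U2pow4 f ≤ 1 := by
  have hprod : ∀ a b c d : G, f a * f b * f c * f d ≤ 1 := fun a b c d =>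
    (le_abs_self _).trans <| by
      simp only [abs_mul]
      exact mul_le_one₀ (mul_le_one₀ (mul_le_one₀ (hf a) (abs_nonneg _) (hf b))
        (abs_nonneg _) (hf c)) (abs_nonneg _) (hf d)
  rw [U2pow4, div_le_one (by positivity)]
  calc _ ≤ ∑ _x : G, ∑ _h : G, ∑ _h' : G, (1 : ℝ) := by gcongr; apply hprod
    _ = _ := by simp only [sum_const, card_univ, nsmul_eq_mul, mul_one]; ring

lemma threeAPSum_div_sq_le_U2pow4 (hodd : Odd (Fintype.card G)) {f : G → ℝ}
    (hf : ∀ x, |f x| ≤ 1) :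
    (threeAPSum f f f / (Fintype.card G : ℝ) ^ 2) ^ 2 ≤ U2pow4 f := by
  set n : ℝ := (Fintype.card G : ℝ)
  have hsq : ∑ y : G, f y ^ 2 ≤ n := by
    calc ∑ y : G, f y ^ 2 ≤ ∑ _y : G, (1 : ℝ) := by
          gcongr with y; exact (sq_le_one_iff_abs_le_one _).2 (hf y)
      _ = n := by simp [n]
  have hU : ∑ y : G, (∑ d : G, f (y - d) * f (y + d)) ^ 2 = n ^ 3 * U2pow4 f := by
    rw [sum_sq_sum_mul_sub_add_eq_U2sum hodd, U2pow4, mul_div_cancel₀ _ (by positivity)]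
  rw [div_pow, div_le_iff₀ (by positivity), threeAPSum_eq_sum_mul]
  calc _ ≤ (∑ y : G, f y ^ 2) * ∑ y : G, (∑ d : G, f (y - d) * f (y + d)) ^ 2 :=
        sum_mul_sq_le_sq_mul_sq _ _ _
    _ ≤ n * (n ^ 3 * U2pow4 f) := by rw [← hU]; gcongr
    _ = _ := by ring

end ThreeAP

section Balanced

variable {G : Type*} [AddCommGroup G] [Fintype G] [DecidableEq G]

lemma sum_indicator_sub_density (A : Finset G) :
    ∑ x : G, ((if x ∈ A then (1 : ℝ) else 0) - (#A : ℝ) / Fintype.card G) = 0 := by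
  simp [sum_sub_distrib, mul_div_cancel₀, Fintype.card_ne_zero]

lemma abs_indicator_sub_density_le_one (A : Finset G) (x : G) :
    |(if x ∈ A then (1 : ℝ) else 0) - (#A : ℝ) / Fintype.card G| ≤ 1 := by
  have h0 : 0 ≤ (#A : ℝ) / Fintype.card G := by positivity
  have h1 : (#A : ℝ) / Fintype.card G ≤ 1 :=
    div_le_one_of_le₀ (by exact_mod_cast card_le_univ A) (by positivity)
  rw [abs_le]
  constructor <;> split_ifs <;> linarith

end Balanced

/-- In a finite abelian group of odd order, a set `A` of density `α` with balanced function
`f = 1_A − α` contains `(α³ ± 3‖f‖_{U²})·|G|²` three-term arithmetic progressions. -/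
theorem count_3aps_of_uniform {G : Type*} [AddCommGroup G] [Fintype G] [DecidableEq G]
    (hodd : Odd (Fintype.card G)) (A : Finset G) (α : ℝ)
    (hα : α = (A.card : ℝ) / (Fintype.card G : ℝ))
    (f : G → ℝ) (hf : ∀ x, f x = (if x ∈ A then (1 : ℝ) else 0) - α) :
    |(∑ x : G, ∑ d : G,
        (if x ∈ A then (1 : ℝ) else 0) * (if x + d ∈ A then (1 : ℝ) else 0) *
          (if x + d + d ∈ A then (1 : ℝ) else 0)) / (Fintype.card G : ℝ) ^ 2 - α ^ 3| ≤
      3 * (U2pow4 f) ^ ((1 : ℝ) / 4) := by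
  have hsum : ∑ x, f x = 0 := by simpa only [hf, hα] using sum_indicator_sub_density A
  have hbdd : ∀ x, |f x| ≤ 1 := fun x => by
    simpa only [hf, hα] using abs_indicator_sub_density_le_one A x
  have hind : (fun x => if x ∈ A then (1 : ℝ) else 0) = f + fun _ => α :=
    funext fun x => by simp [hf]
  have hU := threeAPSum_div_sq_le_U2pow4 hodd hbdd
  have hU0 : 0 ≤ U2pow4 f := (sq_nonneg _).trans hU
  change |threeAPSum (fun x => if x ∈ A then (1 : ℝ) else 0)
    (fun x => if x ∈ A then (1 : ℝ) else 0) (fun x => if x ∈ A then (1 : ℝ) else 0) /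
      (Fintype.card G : ℝ) ^ 2 - α ^ 3| ≤ _
  rw [hind, threeAPSum_add_const hodd hsum, add_div, mul_div_cancel_right₀ _ (by positivity),
    add_sub_cancel_right]
  calc |threeAPSum f f f / (Fintype.card G : ℝ) ^ 2| ≤ √(U2pow4 f) := Real.abs_le_sqrt hU
    _ = U2pow4 f ^ ((1 : ℝ) / 2) := Real.sqrt_eq_rpow _
    _ ≤ U2pow4 f ^ ((1 : ℝ) / 4) :=
      Real.rpow_le_rpow_of_exponent_ge' hU0 (U2pow4_le_one hbdd) (by norm_num) (by norm_num)
    _ ≤ 3 * U2pow4 f ^ ((1 : ℝ) / 4) := by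
      linarith [Real.rpow_nonneg hU0 ((1 : ℝ) / 4)]
end

section
/- Let G be a finite abelian group in which jx = 0 has only the trivial solution for all 1 ≤ j < k, and let f₁,...,f_k: G → ℂ with ‖fᵢ‖_∞ ≤ 1 for all i. Then |𝔼_{x,y ∈ G} f₁(x)f₂(x+y)···f_k(x+(k−1)y)| ≤ ‖f_k‖_{U^{k−1}}. -/
/-!
Write `Λ(f₀, …, f_{k-1}) = 𝔼_{x,y} ∏ᵢ fᵢ(x + i y)` and `Δ_t f (u) = f u · conj (f (u + t))`.
Splitting off `f₀`, applying Cauchy–Schwarz in `x` and substituting `x ↦ x - y` gives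
`|Λ(f)|² ≤ |𝔼_h Λ(g_h)|` with `g_{h,j} = Δ_{(j+1)h} f_{j+1}`, a family of `k - 1` functions whose
last member is `Δ_{(k-1)h} f_{k-1}`. Inducting on `k`, Jensen in `h` and the bijectivity of
`h ↦ (k-1)h` (there is no `(k-1)`-torsion) reduce the claim to the recursion `‖f‖_{U^{m+1}}^{2^{m+1}} = 𝔼_t ‖Δ_t f‖_{U^m}^{2^m}`,
all of whose terms are nonnegative reals once `m ≥ 1`.
-/

open Finset

/-- `‖f‖_{U^k}^{2^k}` : the Gowers uniformity expression
`𝔼_{x,h₁,…,h_k} ∏_{ω ∈ {0,1}^k} C^{|ω|} f(x + ω·h)`. -/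
noncomputable def gowersPow {G : Type*} [AddCommGroup G] [Fintype G] (k : ℕ) (f : G → ℂ) : ℂ :=
  (∑ x : G, ∑ h : Fin k → G, ∏ ω : Fin k → Bool,
      (if (∑ i, if ω i then 1 else 0) % 2 = 0 then
        f (x + ∑ i, if ω i then h i else 0)
      else (starRingEnd ℂ) (f (x + ∑ i, if ω i then h i else 0)))) /
    (Fintype.card G : ℂ) ^ (k + 1)

open scoped BigOperators ComplexConjugate

lemma conj_expect {K ι : Type*} [RCLike K] (s : Finset ι) (φ : ι → K) :
    conj (𝔼 i ∈ s, φ i) = 𝔼 i ∈ s, conj (φ i) := by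
  simp [expect_eq_sum_div_card, map_sum]

lemma pow_expect_le_expect_pow {α ι : Type*} [Semifield α] [LinearOrder α] [IsStrictOrderedRing α]
    [ExistsAddOfLE α] (s : Finset ι) {φ : ι → α} (hφ : ∀ i ∈ s, 0 ≤ φ i)
    {n : ℕ} (hn : n ≠ 0) : (𝔼 i ∈ s, φ i) ^ n ≤ 𝔼 i ∈ s, φ i ^ n := by
  obtain ⟨n, rfl⟩ := Nat.exists_eq_succ_of_ne_zero hn
  obtain rfl | hs := s.eq_empty_or_nonempty
  · simp
  have hcard : (0 : α) < #s := by exact_mod_cast hs.card_pos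
  rw [expect_eq_sum_div_card, expect_eq_sum_div_card, div_pow, pow_succ (#s : α),
    ← div_div, div_le_div_iff_of_pos_right hcard]
  exact pow_sum_div_card_le_sum_pow hφ n

lemma expect_fin_cons {α M : Type*} [Fintype α] [AddCommMonoid M] [Module ℚ≥0 M] {k : ℕ}
    (φ : (Fin (k + 1) → α) → M) :
    𝔼 h, φ h = 𝔼 t, 𝔼 h : Fin k → α, φ (Fin.cons t h) := by
  rw [← Fintype.expect_equiv (Fin.consEquiv fun _ => α) (fun p => φ (Fin.cons p.1 p.2)) φ
    fun _ => rfl, ← univ_product_univ]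
  exact expect_product' univ univ fun t h => φ (Fin.cons t h)

noncomputable def conjPow (n : ℕ) (z : ℂ) : ℂ := if n % 2 = 0 then z else conj z

lemma conjPow_succ (n : ℕ) (z : ℂ) : conjPow (n + 1) z = conj (conjPow n z) := by
  rcases Nat.mod_two_eq_zero_or_one n with h | h <;> simp [conjPow, h, Nat.succ_mod_two_eq_zero_iff]

lemma conjPow_succ' (n : ℕ) (z : ℂ) : conjPow (n + 1) z = conjPow n (conj z) := by
  rcases Nat.mod_two_eq_zero_or_one n with h | h <;> simp [conjPow, h, Nat.succ_mod_two_eq_zero_iff]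

lemma conjPow_mul (n : ℕ) (z w : ℂ) : conjPow n (z * w) = conjPow n z * conjPow n w := by
  unfold conjPow; split_ifs <;> simp

section AddCommMonoid

variable {G : Type*} [AddCommMonoid G]

noncomputable def mulDeriv (t : G) (f : G → ℂ) (u : G) : ℂ := f u * conj (f (u + t))

lemma norm_mulDeriv_le {f : G → ℂ} (hf : ∀ x, ‖f x‖ ≤ 1) (t x : G) : ‖mulDeriv t f x‖ ≤ 1 := by
  rw [mulDeriv, norm_mul, Complex.norm_conj]
  exact mul_le_one₀ (hf x) (norm_nonneg _) (hf (x + t))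

noncomputable def cubeProd {k : ℕ} (f : G → ℂ) (h : Fin k → G) (x : G) : ℂ :=
  ∏ ω : Fin k → Bool, conjPow (∑ i, if ω i then 1 else 0) (f (x + ∑ i, if ω i then h i else 0))

lemma conj_cubeProd {k : ℕ} (f : G → ℂ) (h : Fin k → G) (x : G) :
    conj (cubeProd f h x) = ∏ ω : Fin k → Bool,
      conjPow ((∑ i, if ω i then 1 else 0) + 1) (f (x + ∑ i, if ω i then h i else 0)) := by
  simp only [cubeProd, map_prod, conjPow_succ]

lemma cubeProd_cons {k : ℕ} (f : G → ℂ) (t : G) (h : Fin k → G) (x : G) :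
    cubeProd f (Fin.cons t h) x = cubeProd f h x * conj (cubeProd f h (x + t)) := by
  rw [cubeProd, ← (Fin.consEquiv fun _ => Bool).prod_comp, Fintype.prod_prod_type,
    Fintype.prod_bool, conj_cubeProd, mul_comm]
  simp only [Fin.consEquiv_apply, Fin.sum_univ_succ, Fin.cons_zero, Fin.cons_succ,
    Bool.false_eq_true, if_true, if_false, zero_add, add_comm 1, add_assoc]
  rfl

lemma cubeProd_mulDeriv {k : ℕ} (f : G → ℂ) (t : G) (h : Fin k → G) (x : G) :
    cubeProd (mulDeriv t f) h x = cubeProd f h x * conj (cubeProd f h (x + t)) := by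
  rw [conj_cubeProd, cubeProd, cubeProd, ← prod_mul_distrib]
  refine prod_congr rfl fun ω _ => ?_
  rw [mulDeriv, conjPow_mul, conjPow_succ', add_right_comm]

end AddCommMonoid

section FiniteAbelianGroup

variable {G : Type*} [AddCommGroup G] [Fintype G]

lemma nsmul_bijective_of_torsionFree {n : ℕ} (hn : ∀ x : G, n • x = 0 → x = 0) :
    Function.Bijective fun x : G => n • x :=
  Finite.injective_iff_bijective.1 <|
    (injective_iff_map_eq_zero (nsmulAddMonoidHom (α := G) n)).2 hn

lemma expect_expect_mul_conj_add (φ : G → ℂ) :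
    𝔼 y, 𝔼 h, φ y * conj (φ (y + h)) = ((‖𝔼 y, φ y‖ ^ 2 : ℝ) : ℂ) := by
  have hshift : ∀ y, 𝔼 h, φ y * conj (φ (y + h)) = φ y * conj (𝔼 z, φ z) := fun y => by
    rw [conj_expect, mul_expect]
    exact Fintype.expect_equiv (Equiv.addLeft y) _ _ fun _ => rfl
  simp_rw [hshift, ← expect_mul, Complex.mul_conj']
  push_cast
  rfl

lemma gowersPow_eq_expect (k : ℕ) (f : G → ℂ) :
    gowersPow k f = 𝔼 x, 𝔼 h : Fin k → G, cubeProd f h x := by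
  change (∑ x, ∑ h, cubeProd f h x) / _ = _
  simp only [Fintype.expect_eq_sum_div_card, ← sum_div, Fintype.card_fun, Fintype.card_fin]
  push_cast
  ring

lemma gowersPow_succ (k : ℕ) (f : G → ℂ) :
    gowersPow (k + 1) f = 𝔼 t, gowersPow k (mulDeriv t f) := by
  simp_rw [gowersPow_eq_expect, expect_fin_cons, cubeProd_cons, cubeProd_mulDeriv]
  exact expect_comm _ _ _

lemma gowersPow_succ_eq_ofReal (k : ℕ) (f : G → ℂ) :
    gowersPow (k + 1) f = ((𝔼 h : Fin k → G, ‖𝔼 x, cubeProd f h x‖ ^ 2 : ℝ) : ℂ) := by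
  simp_rw [gowersPow_eq_expect, expect_fin_cons, cubeProd_cons, Complex.ofReal_expect,
    ← expect_expect_mul_conj_add]
  exact (expect_congr rfl fun x _ => expect_comm _ _ _).trans (expect_comm _ _ _)

lemma norm_gowersPow_succ_succ (k : ℕ) (f : G → ℂ) :
    ‖gowersPow (k + 2) f‖ = 𝔼 t, ‖gowersPow (k + 1) (mulDeriv t f)‖ := by
  have hr : ∀ t, 0 ≤ 𝔼 h : Fin k → G, ‖𝔼 x, cubeProd (mulDeriv t f) h x‖ ^ 2 :=
    fun t => expect_nonneg fun _ _ => sq_nonneg _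
  simp_rw [gowersPow_succ (k + 1), gowersPow_succ_eq_ofReal, Complex.norm_of_nonneg (hr _),
    ← Complex.ofReal_expect, Complex.norm_of_nonneg (expect_nonneg fun t _ => hr t)]

noncomputable def apAverage {k : ℕ} (f : Fin k → G → ℂ) : ℂ :=
  𝔼 x, 𝔼 y, ∏ i, f i (x + (i : ℕ) • y)

lemma apAverage_eq_sum_div {k : ℕ} (f : Fin k → G → ℂ) :
    apAverage f = (∑ x, ∑ y, ∏ i, f i (x + (i : ℕ) • y)) / (Fintype.card G : ℂ) ^ 2 := by
  simp only [apAverage, Fintype.expect_eq_sum_div_card, ← sum_div, div_div, sq]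

lemma apAverage_fin_one (f : Fin 1 → G → ℂ) : apAverage f = gowersPow 0 (f 0) := by
  simp [apAverage, gowersPow_eq_expect, cubeProd, conjPow]

noncomputable def apDeriv {k : ℕ} (f : Fin (k + 1) → G → ℂ) (h : G) (j : Fin k) : G → ℂ :=
  mulDeriv (((j : ℕ) + 1) • h) (f j.succ)

lemma apAverage_apDeriv {k : ℕ} (f : Fin (k + 1) → G → ℂ) (h : G) :
    apAverage (apDeriv f h) = 𝔼 x, 𝔼 y, (∏ j : Fin k, f j.succ (x + ((j : ℕ) + 1) • y)) *
      conj (∏ j : Fin k, f j.succ (x + ((j : ℕ) + 1) • (y + h))) := by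
  rw [apAverage, expect_comm]
  refine (expect_congr rfl fun y _ => ?_).trans (expect_comm _ _ _)
  refine Fintype.expect_equiv (Equiv.subRight y) _ _ fun x => ?_
  rw [map_prod, ← prod_mul_distrib]
  refine prod_congr rfl fun j _ => ?_
  have h₁ : x - y + ((j : ℕ) + 1) • y = x + (j : ℕ) • y := by rw [succ_nsmul]; abel
  have h₂ : x - y + ((j : ℕ) + 1) • (y + h) = x + (j : ℕ) • y + ((j : ℕ) + 1) • h := by
    rw [smul_add, succ_nsmul]; abel
  rw [Equiv.subRight_apply, h₁, h₂, apDeriv, mulDeriv]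

lemma norm_apAverage_sq_le {k : ℕ} (f : Fin (k + 1) → G → ℂ) (hf : ∀ x, ‖f 0 x‖ ≤ 1) :
    ‖apAverage f‖ ^ 2 ≤ ‖𝔼 h, apAverage (apDeriv f h)‖ := by
  set P : G → G → ℂ := fun x y => ∏ j : Fin k, f j.succ (x + ((j : ℕ) + 1) • y)
  have hsplit : apAverage f = 𝔼 x, f 0 x * 𝔼 y, P x y := by
    simp only [apAverage, Fin.prod_univ_succ, mul_expect, P, Fin.val_zero, Fin.val_succ, zero_smul,
      add_zero]
  have hderiv : 𝔼 h, apAverage (apDeriv f h) = ((𝔼 x, ‖𝔼 y, P x y‖ ^ 2 : ℝ) : ℂ) := by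
    simp_rw [apAverage_apDeriv, Complex.ofReal_expect, ← expect_expect_mul_conj_add]
    exact (expect_comm _ _ _).trans (expect_congr rfl fun x _ => expect_comm _ _ _)
  calc ‖apAverage f‖ ^ 2 ≤ (𝔼 x, ‖𝔼 y, P x y‖) ^ 2 := by
        gcongr
        rw [hsplit]
        refine (RCLike.norm_expect_le (K := ℂ)).trans (expect_le_expect fun x _ => ?_)
        rw [norm_mul]
        exact mul_le_of_le_one_left (norm_nonneg _) (hf x)
    _ ≤ 𝔼 x, ‖𝔼 y, P x y‖ ^ 2 := pow_expect_le_expect_pow _ (fun _ _ => norm_nonneg _) two_ne_zero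
    _ = ‖𝔼 h, apAverage (apDeriv f h)‖ := by
        rw [hderiv, Complex.norm_of_nonneg (expect_nonneg fun _ _ => by positivity)]

theorem norm_apAverage_pow_le_norm_gowersPow (m : ℕ) (f : Fin (m + 2) → G → ℂ)
    (htor : ∀ j : ℕ, 1 ≤ j → j < m + 2 → ∀ x : G, j • x = 0 → x = 0)
    (hf : ∀ i x, ‖f i x‖ ≤ 1) :
    ‖apAverage f‖ ^ 2 ^ (m + 1) ≤ ‖gowersPow (m + 1) (f (Fin.last (m + 1)))‖ := by
  induction m with
  | zero =>
    have hderiv : ∀ h, apAverage (apDeriv f h) = gowersPow 0 (mulDeriv h (f 1)) := fun h => by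
      simp [apAverage_fin_one, apDeriv]
    simpa [hderiv, ← gowersPow_succ] using norm_apAverage_sq_le f (hf 0)
  | succ m ih =>
    set φ := f (Fin.last (m + 2))
    have hlast : ∀ h, apDeriv f h (Fin.last (m + 1)) = mulDeriv ((m + 2) • h) φ := fun h => by
      simp [apDeriv, φ]
    have hderiv : ∀ h, ‖apAverage (apDeriv f h)‖ ^ 2 ^ (m + 1) ≤
        ‖gowersPow (m + 1) (mulDeriv ((m + 2) • h) φ)‖ := fun h =>
      hlast h ▸ ih (apDeriv f h) (fun j hj₁ hj₂ => htor j hj₁ (by omega))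
        fun j => norm_mulDeriv_le (hf j.succ) _
    have hbij := nsmul_bijective_of_torsionFree (htor (m + 2) (by omega) (by omega))
    calc ‖apAverage f‖ ^ 2 ^ (m + 2) = (‖apAverage f‖ ^ 2) ^ 2 ^ (m + 1) := by
          rw [← pow_mul, pow_succ' 2 (m + 1)]
      _ ≤ ‖𝔼 h, apAverage (apDeriv f h)‖ ^ 2 ^ (m + 1) := by
          gcongr; exact norm_apAverage_sq_le f (hf 0)
      _ ≤ (𝔼 h, ‖apAverage (apDeriv f h)‖) ^ 2 ^ (m + 1) := by
          gcongr; exact RCLike.norm_expect_le (K := ℂ)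
      _ ≤ 𝔼 h, ‖apAverage (apDeriv f h)‖ ^ 2 ^ (m + 1) :=
          pow_expect_le_expect_pow _ (fun _ _ => norm_nonneg _) (by positivity)
      _ ≤ 𝔼 h, ‖gowersPow (m + 1) (mulDeriv ((m + 2) • h) φ)‖ :=
          expect_le_expect fun h _ => hderiv h
      _ = 𝔼 t, ‖gowersPow (m + 1) (mulDeriv t φ)‖ :=
          Fintype.expect_bijective _ hbij _ _ fun _ => rfl
      _ = ‖gowersPow (m + 2) φ‖ := (norm_gowersPow_succ_succ m φ).symm

end FiniteAbelianGroup

/-- Generalized von Neumann theorem for arithmetic progressions: if `jx = 0` has only the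
trivial solution for `1 ≤ j < k` and `‖fᵢ‖_∞ ≤ 1`, then
`|𝔼_{x,y} f₁(x)⋯f_k(x+(k−1)y)| ≤ ‖f_k‖_{U^{k−1}}`. -/
theorem generalized_von_neumann_aps {G : Type*} [AddCommGroup G] [Fintype G]
    (k : ℕ) (hk : 2 ≤ k)
    (htor : ∀ j : ℕ, 1 ≤ j → j < k → ∀ x : G, j • x = 0 → x = 0)
    (f : Fin k → G → ℂ) (hf : ∀ i x, ‖f i x‖ ≤ 1) :
    ‖(∑ x : G, ∑ y : G, ∏ i : Fin k, f i (x + (i : ℕ) • y)) /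
        (Fintype.card G : ℂ) ^ 2‖ ≤
      ‖gowersPow (k - 1) (f ⟨k - 1, by omega⟩)‖ ^ ((1 : ℝ) / 2 ^ (k - 1)) := by
  obtain ⟨m, rfl⟩ : ∃ m, k = m + 2 := ⟨k - 2, by omega⟩
  rw [← apAverage_eq_sum_div, one_div, Real.le_rpow_inv_iff_of_pos (norm_nonneg _) (norm_nonneg _)
    (by positivity)]
  exact_mod_cast norm_apAverage_pow_le_norm_gowersPow m f htor hf
end

section
/- Let p be an odd prime and let L₁, ..., L_m be linear forms in d variables over 𝔽_p such that the quadratic forms LᵢᵀLᵢ are linearly independent over 𝔽_p. Let A = {x ∈ 𝔽_p^n : xᵀx = 0}. Then |ℙ_{x ∈ (𝔽_p^n)^d}[Lᵢ(x) ∈ A for all i] − p^{-m}| ≤ p^{-n/2}. -/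
/-!
Detect the conditions `Lᵢ(x)ᵀLᵢ(x) = 0` with an additive character `ψ` of `𝔽_q`: summing over
the dual variables `t ∈ 𝔽_q^m` gives `q^m · #{x} = ∑_t S(t)^n`, where
`S(t) = ∑_{v ∈ 𝔽_q^d} ψ(Q_t(v))` and `Q_t = ∑ tᵢ Lᵢ²`, the exponent `n` appearing because the
coordinates of `x` are independent. The term `t = 0` is the main term `q^{dn}`. For `t ≠ 0`,
square-independence and polarisation (`2 ≠ 0`) make `Q_t` a nonzero quadratic form; diagonalising
it splits `S(t)` into one-variable sums `∑_y ψ(a y²)`, which are Gauss sums of absolute value `√q`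
when `a ≠ 0`, so `|S(t)| ≤ q^d / √q`.
-/

open Finset QuadraticMap Matrix

lemma AddChar.map_sum_eq_prod_s13 {A M ι : Type*} [AddCommMonoid A] [CommMonoid M] (ψ : AddChar A M)
    (s : Finset ι) (f : ι → A) : ψ (∑ i ∈ s, f i) = ∏ i ∈ s, ψ (f i) := by
  classical
  induction s using Finset.induction_on with
  | empty => simp
  | insert a s ha ih => rw [sum_insert ha, prod_insert ha, AddChar.map_add_eq_mul, ih]

lemma AddChar.sum_pi_map_sum_eq_pow {R M α ι : Type*} [AddCommMonoid R] [CommSemiring M]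
    [Fintype α] [Fintype ι] [DecidableEq ι] (ψ : AddChar R M) (g : α → R) :
    ∑ y : ι → α, ψ (∑ j, g (y j)) = (∑ a, ψ (g a)) ^ Fintype.card ι := by
  rw [← Finset.card_univ, ← prod_const, Fintype.prod_sum]
  simp only [ψ.map_sum_eq_prod_s13]

lemma AddChar.sum_map_weightedSumSquares {R M ι : Type*} [CommRing R] [Fintype R]
    [CommSemiring M] [Fintype ι] [DecidableEq ι] (ψ : AddChar R M) (w : ι → R) :
    ∑ z, ψ (weightedSumSquares R w z) = ∏ i, ∑ y, ψ (w i * y ^ 2) := by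
  simp only [weightedSumSquares_apply, ψ.map_sum_eq_prod_s13, Fintype.prod_sum, smul_eq_mul,
    _root_.sq]

theorem AddChar.card_filter_forall_eq_zero_mul_eq_sum {R X ι : Type*} [CommRing R] [Fintype R]
    [DecidableEq R] [Fintype X] [Fintype ι] [DecidableEq ι] {ψ : AddChar R ℂ}
    (hψ : ψ.IsPrimitive) (f : ι → X → R) :
    (#{x | ∀ i, f i x = 0} : ℂ) * Fintype.card R ^ Fintype.card ι =
      ∑ t : ι → R, ∑ x, ψ (∑ i, t i * f i x) := by
  have hx (x : X) : ∑ t : ι → R, ψ (∑ i, t i * f i x) =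
      if ∀ i, f i x = 0 then (Fintype.card R : ℂ) ^ Fintype.card ι else 0 := by
    simp only [ψ.map_sum_eq_prod_s13]
    rw [← Fintype.prod_sum (fun i s => ψ (s * f i x))]
    simp only [AddChar.sum_mulShift _ hψ, apply_ite Nat.cast, Nat.cast_zero,
      Fintype.prod_ite_zero, prod_const, card_univ]
  rw [sum_comm, sum_congr rfl fun x _ => hx x, ← sum_filter, sum_const, nsmul_eq_mul]

section FiniteField

variable {F : Type*} [Field F] [Fintype F]

theorem norm_gaussSum {χ : MulChar F ℂ} (hχ : χ ≠ 1) {ψ : AddChar F ℂ} (hψ : ψ.IsPrimitive) :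
    ‖gaussSum χ ψ‖ = √(Fintype.card F) := by
  have h := gaussSum_mul_gaussSum_eq_card hχ hψ
  rw [← star_gaussSum_eq, RCLike.star_def, Complex.mul_conj'] at h
  rw [← Real.sqrt_sq (norm_nonneg _)]
  exact congrArg _ (mod_cast h)

variable [DecidableEq F]

theorem sum_addChar_mul_sq_eq_gaussSum (hF : ringChar F ≠ 2) {ψ : AddChar F ℂ}
    (hψ : ψ.IsPrimitive) {a : F} (ha : a ≠ 0) :
    ∑ y, ψ (a * y ^ 2) =
      gaussSum ((quadraticChar F).ringHomComp (Int.castRingHom ℂ)) (ψ.mulShift a) := by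
  have hsqrts (z : F) : (#{y | y ^ 2 = z} : ℂ) = quadraticChar F z + 1 := by
    have := quadraticChar_card_sqrts hF z
    rw [Set.toFinset_ofPred] at this
    exact_mod_cast this
  have hsum : ∑ z, ψ (a * z) = 0 := by
    simpa [ha, mul_comm] using AddChar.sum_mulShift a hψ
  calc ∑ y, ψ (a * y ^ 2) = ∑ z, (#{y | y ^ 2 = z} : ℂ) * ψ (a * z) := by
        rw [← sum_fiberwise' univ (· ^ 2) (fun z => ψ (a * z))]
        simp
    _ = _ := by
        simp [hsqrts, add_mul, sum_add_distrib, hsum, gaussSum]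

theorem norm_sum_addChar_mul_sq (hF : ringChar F ≠ 2) {ψ : AddChar F ℂ} (hψ : ψ.IsPrimitive)
    {a : F} (ha : a ≠ 0) : ‖∑ y, ψ (a * y ^ 2)‖ = √(Fintype.card F) := by
  rw [sum_addChar_mul_sq_eq_gaussSum hF hψ ha]
  refine norm_gaussSum ?_ (AddChar.IsPrimitive.of_ne_one (hψ ha))
  rw [Ne, MulChar.ringHomComp_eq_one_iff Int.cast_injective]
  exact quadraticChar_ne_one hF

theorem norm_sum_addChar_quadraticForm_le (hF : ringChar F ≠ 2) {ψ : AddChar F ℂ}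
    (hψ : ψ.IsPrimitive) {V : Type*} [AddCommGroup V] [Module F V] [Fintype V]
    {Q : QuadraticForm F V} (hQ : Q ≠ 0) :
    ‖∑ v, ψ (Q v)‖ ≤ Fintype.card V / √(Fintype.card F) := by
  have : Invertible (2 : F) := invertibleOfNonzero (Ring.two_ne_zero hF)
  obtain ⟨w, ⟨e⟩⟩ := QuadraticForm.equivalent_weightedSumSquares Q
  obtain ⟨r, hr⟩ : ∃ r, w r ≠ 0 := by
    by_contra! hw
    refine hQ (QuadraticMap.ext fun v => ?_)
    rw [← e.map_app v, weightedSumSquares_apply]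
    simp [hw]
  have hq : (0 : ℝ) < √(Fintype.card F) := Real.sqrt_pos.mpr (mod_cast Fintype.card_pos)
  have hsum : ∑ v, ψ (Q v) = ∏ i, ∑ y, ψ (w i * y ^ 2) := by
    rw [← ψ.sum_map_weightedSumSquares, ← e.toLinearEquiv.toEquiv.sum_comp]
    simp [e.map_app]
  have hle (i) : ‖∑ y, ψ (w i * y ^ 2)‖ ≤ Fintype.card F :=
    (norm_sum_le _ _).trans (by simp)
  rw [hsum, norm_prod, ← mul_prod_erase _ _ (mem_univ r), norm_sum_addChar_mul_sq hF hψ hr,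
    Module.card_eq_pow_finrank (K := F) (V := V)]
  calc √(Fintype.card F) * ∏ i ∈ univ.erase r, ‖∑ y, ψ (w i * y ^ 2)‖
      ≤ √(Fintype.card F) * (Fintype.card F : ℝ) ^ (Module.finrank F V - 1) := by
        gcongr
        refine (prod_le_prod (fun _ _ => norm_nonneg _) fun i _ => hle i).trans_eq ?_
        simp
    _ = _ := by
        rw [eq_div_iff hq.ne', mul_right_comm, Real.mul_self_sqrt (Nat.cast_nonneg _),
          ← pow_succ', Nat.sub_add_cancel (Fin.pos r)]
        push_cast
        rfl

end FiniteField

theorem eq_zero_of_weightedSumSquares_comp_mulVecLin_eq_zero {R ι κ : Type*} [CommRing R]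
    [Fintype ι] [Fintype κ] [DecidableEq κ] {c : ι → κ → R} (h2 : IsUnit (2 : R))
    (hsq : LinearIndependent R fun i (rs : κ × κ) => c i rs.1 * c i rs.2) {t : ι → R}
    (h : (weightedSumSquares R t).comp (mulVecLin (of c)) = 0) : t = 0 := by
  have hpolar (r s : κ) : 2 * ∑ i, t i * (c i r * c i s) = 0 := by
    have := congrArg (fun Q : QuadraticMap R (κ → R) R => polar Q (Pi.single r 1) (Pi.single s 1)) h
    simp only [polar, QuadraticMap.comp_apply, mulVecBilin_apply, mulVec_add, mulVec_single,
      MulOpposite.op_one, one_smul, weightedSumSquares_apply, Pi.add_apply, col_apply, of_apply,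
      smul_eq_mul, _root_.zero_apply, sub_self] at this
    rw [← this, mul_sum, ← sum_sub_distrib, ← sum_sub_distrib]
    exact sum_congr rfl fun i _ => by ring
  funext i
  refine Fintype.linearIndependent_iff.mp hsq t (funext fun rs => ?_) i
  simpa using h2.mul_right_eq_zero.mp (hpolar rs.1 rs.2)

lemma AddChar.sum_map_weightedSumSquares_columns {R ι κ σ : Type*} [CommRing R] [Fintype R]
    [Fintype ι] [Fintype κ] [DecidableEq κ] [Fintype σ] [DecidableEq σ] (ψ : AddChar R ℂ)
    (c : ι → κ → R) (t : ι → R) :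
    ∑ x : κ → σ → R, ψ (∑ i, t i * ∑ j, (∑ u, c i u * x u j) ^ 2) =
      (∑ v, ψ ((weightedSumSquares R t).comp (mulVecLin (of c)) v)) ^ Fintype.card σ := by
  rw [← ψ.sum_pi_map_sum_eq_pow, ← (Equiv.piComm fun _ _ => R).sum_comp]
  refine sum_congr rfl fun x _ => congrArg ψ ?_
  simp only [mul_sum]
  rw [sum_comm]
  refine sum_congr rfl fun j _ => ?_
  simp [weightedSumSquares_apply, mulVec, dotProduct, _root_.sq]

theorem abs_card_quadric_system_mul_sub_le {F ι κ σ : Type*} [Field F] [Fintype F]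
    [DecidableEq F] [Fintype ι] [DecidableEq ι] [Fintype κ] [DecidableEq κ] [Fintype σ]
    [DecidableEq σ] (hF : ringChar F ≠ 2) (c : ι → κ → F)
    (hsq : LinearIndependent F fun i (rs : κ × κ) => c i rs.1 * c i rs.2) :
    |(#{x : κ → σ → F | ∀ i, ∑ j, (∑ u, c i u * x u j) ^ 2 = 0} : ℝ) *
        Fintype.card F ^ Fintype.card ι - Fintype.card F ^ (Fintype.card κ * Fintype.card σ)| ≤
      Fintype.card F ^ Fintype.card ι *
        (Fintype.card F ^ Fintype.card κ / √(Fintype.card F)) ^ Fintype.card σ := by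
  obtain ⟨ψ, hψ1⟩ := AddChar.exists_apply_ne_zero.mpr (one_ne_zero (α := F))
  have hψ : ψ.IsPrimitive := AddChar.IsPrimitive.of_ne_one fun h => hψ1 (by simp [h])
  set S : (ι → F) → ℂ := fun t => ∑ v, ψ ((weightedSumSquares F t).comp (mulVecLin (of c)) v)
  have hcount : (#{x : κ → σ → F | ∀ i, ∑ j, (∑ u, c i u * x u j) ^ 2 = 0} : ℂ) *
      Fintype.card F ^ Fintype.card ι =
        S 0 ^ Fintype.card σ + ∑ t ∈ univ.erase 0, S t ^ Fintype.card σ := by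
    rw [AddChar.card_filter_forall_eq_zero_mul_eq_sum hψ,
      add_sum_erase univ (fun t => S t ^ Fintype.card σ) (mem_univ 0)]
    exact sum_congr rfl fun t _ => ψ.sum_map_weightedSumSquares_columns c t
  have hS0 : S 0 = Fintype.card F ^ Fintype.card κ := by
    simp [S]
  have hS (t) (ht : t ≠ 0) : ‖S t‖ ≤ Fintype.card F ^ Fintype.card κ / √(Fintype.card F) := by
    refine (norm_sum_addChar_quadraticForm_le hF hψ fun h => ht ?_).trans_eq (by simp)
    exact eq_zero_of_weightedSumSquares_comp_mulVecLin_eq_zero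
      (Ne.isUnit (Ring.two_ne_zero hF)) hsq h
  have hrest : ‖∑ t ∈ univ.erase 0, S t ^ Fintype.card σ‖ ≤ Fintype.card F ^ Fintype.card ι *
      (Fintype.card F ^ Fintype.card κ / √(Fintype.card F)) ^ Fintype.card σ := by
    calc ‖∑ t ∈ univ.erase 0, S t ^ Fintype.card σ‖
        ≤ ∑ _t ∈ univ.erase (0 : ι → F),
            (Fintype.card F ^ Fintype.card κ / √(Fintype.card F) : ℝ) ^ Fintype.card σ :=
          (norm_sum_le _ _).trans <| sum_le_sum fun t ht => by
            rw [norm_pow]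
            exact pow_le_pow_left₀ (norm_nonneg _) (hS t (ne_of_mem_erase ht)) _
      _ ≤ _ := by
          rw [sum_const, nsmul_eq_mul]
          gcongr
          exact (Nat.cast_le.mpr card_erase_le).trans_eq (by simp)
  rw [← Real.norm_eq_abs, ← Complex.norm_real]
  convert hrest using 2
  push_cast
  rw [hcount, hS0, ← pow_mul]
  ring

/-- For a square-independent system of linear forms `L₁,…,L_m` and the quadric
`A = {x : xᵀx = 0}` in `𝔽_p^n`, the probability that every `Lᵢ(x) ∈ A` differs from
`p^{-m}` by at most `p^{-n/2}`. -/
theorem quadric_count_square_independent (p : ℕ) [Fact p.Prime] (hp : Odd p)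
    (n d m : ℕ) (c : Fin m → Fin d → ZMod p)
    (hsq : LinearIndependent (ZMod p)
      (fun i : Fin m => fun rs : Fin d × Fin d => c i rs.1 * c i rs.2)) :
    |((Finset.univ.filter (fun x : Fin d → Fin n → ZMod p =>
          ∀ i : Fin m, ∑ j, (∑ u, c i u * x u j) ^ 2 = 0)).card : ℝ) /
        (Fintype.card (Fin d → Fin n → ZMod p) : ℝ) - (p : ℝ) ^ (-(m : ℝ))| ≤
      (p : ℝ) ^ (-(n : ℝ) / 2) := by
  have hchar : ringChar (ZMod p) ≠ 2 := by
    rw [ZMod.ringChar_zmod_n]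
    rintro rfl
    exact Nat.not_odd_iff_even.mpr even_two hp
  set X := (#{x : Fin d → Fin n → ZMod p | ∀ i, ∑ j, (∑ u, c i u * x u j) ^ 2 = 0} : ℝ)
  -- `convert` reconciles `Nat.decidableForallFin`, which decides the filter in the statement,
  -- with the `Fintype.decidableForallFintype` of the general lemma.
  have H : |X * p ^ m - p ^ (d * n)| ≤ p ^ m * (p ^ d / √p) ^ n := by
    convert abs_card_quadric_system_mul_sub_le hchar c hsq (σ := Fin n) using 8 <;>
      simp only [ZMod.card, Fintype.card_fin]
  have hp0 : (0 : ℝ) < p := mod_cast (Fact.out : p.Prime).pos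
  rw [Real.rpow_neg hp0.le, Real.rpow_natCast, neg_div, Real.rpow_neg hp0.le,
    Real.rpow_div_two_eq_sqrt _ hp0.le, Real.rpow_natCast]
  simp only [Fintype.card_fun, ZMod.card, Fintype.card_fin, Nat.cast_pow, ← pow_mul]
  calc |X / (p : ℝ) ^ (n * d) - ((p : ℝ) ^ m)⁻¹|
      = |X * p ^ m - p ^ (d * n)| / (p ^ m * p ^ (d * n)) := by
        rw [← abs_of_pos (by positivity : (0 : ℝ) < p ^ m * p ^ (d * n)), ← abs_div, mul_comm n d]
        congr 1
        field_simp
    _ ≤ p ^ m * (p ^ d / √p) ^ n / (p ^ m * p ^ (d * n)) := by gcongr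
    _ = (√p ^ n)⁻¹ := by
        rw [div_pow, pow_mul]
        field_simp
end

section
/- For a random symmetric function u: X² → {−1,1} (with X a large finite set), the hypergraph function H(x,y,z) = (3 + u(x,y) + u(y,z) + u(x,z))/6 satisfies 𝔼_{x,y,z,w} H(x,y,z)H(x,y,w) = 5/18 + o(1) as |X| → ∞, rather than the value 1/4 expected for a quasirandom hypergraph of density 1/2. -/
open Finset

/-- A vertex-uniform but not quasirandom 3-uniform hypergraph: for a symmetric
`±1`-valued function `u` with small first- and second-moment averages (as holds with high
probability for a random symmetric `u`), the weighted hypergraph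
`H(x,y,z) = (3 + u(x,y) + u(y,z) + u(x,z))/6` satisfies
`𝔼_{x,y,z,w} H(x,y,z)H(x,y,w) = 5/18 + o(1)` rather than the quasirandom value `1/4`. -/
theorem hypergraph_five_eighteenths :
    ∀ ε > (0 : ℝ), ∃ δ > (0 : ℝ), ∀ (X : Type) [Fintype X] [Nonempty X],
      ∀ u : X → X → ℝ,
        (∀ x y, u x y = u y x) →
        (∀ x y, u x y = 1 ∨ u x y = -1) →
        |(∑ x : X, ∑ y : X, u x y) / (Fintype.card X : ℝ) ^ 2| ≤ δ →
        |(∑ x : X, ∑ z : X, ∑ w : X, u x z * u x w) / (Fintype.card X : ℝ) ^ 3| ≤ δ →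
        |(∑ x : X, ∑ y : X, ∑ z : X, ∑ w : X,
            ((3 + u x y + u y z + u x z) / 6) * ((3 + u x y + u y w + u x w) / 6)) /
            (Fintype.card X : ℝ) ^ 4 - 5 / 18| ≤ ε := by
  intro ε hε
  refine ⟨min ε 1, lt_min hε one_pos, ?_⟩
  intro X _ _ u hsymm hpm hA hB
  set δ : ℝ := min ε 1 with hδdef
  have hδε : δ ≤ ε := min_le_left _ _
  have hδ1 : δ ≤ 1 := min_le_right _ _
  have hδ0 : 0 < δ := lt_min hε one_pos
  set n : ℝ := (Fintype.card X : ℝ) with hn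
  have hn1 : (1:ℝ) ≤ n := by
    rw [hn]
    exact_mod_cast Nat.one_le_iff_ne_zero.mpr Fintype.card_ne_zero
  have hn0 : n ≠ 0 := by linarith
  set f : X → ℝ := fun x => ∑ z, u x z with hf
  set S1 : ℝ := ∑ x : X, ∑ y : X, u x y with hS1
  set S2 : ℝ := ∑ x : X, ∑ z : X, ∑ w : X, u x z * u x w with hS2
  have hfsum : ∑ x : X, f x = S1 := rfl
  have hsumcol : ∀ y : X, ∑ x : X, u x y = f y := by
    intro y
    exact Finset.sum_congr rfl fun x _ => hsymm x y
  have hS2' : S2 = ∑ x : X, (f x)^2 := by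
    rw [hS2]
    refine Finset.sum_congr rfl fun x _ => ?_
    rw [sq]
    rw [Finset.sum_mul_sum]
  -- inner factorization over z, w
  have inner : ∀ x y : X,
      (∑ z : X, ∑ w : X, ((3 + u x y + u y z + u x z) / 6) * ((3 + u x y + u y w + u x w) / 6))
      = ((3*n + n * u x y + f y + f x)/6)^2 := by
    intro x y
    have hz : (∑ z : X, ((3 + u x y + u y z + u x z) / 6))
        = (3*n + n * u x y + f y + f x)/6 := by
      rw [← Finset.sum_div]
      congr 1
      rw [Finset.sum_add_distrib, Finset.sum_add_distrib, Finset.sum_add_distrib,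
        Finset.sum_const, Finset.sum_const, Finset.card_univ, nsmul_eq_mul, nsmul_eq_mul]
      show n * 3 + n * u x y + (∑ z : X, u y z) + (∑ z : X, u x z) = _
      ring
    calc (∑ z : X, ∑ w : X,
            ((3 + u x y + u y z + u x z) / 6) * ((3 + u x y + u y w + u x w) / 6))
        = (∑ z : X, ((3 + u x y + u y z + u x z) / 6)) *
          (∑ w : X, ((3 + u x y + u y w + u x w) / 6)) := (Finset.sum_mul_sum _ _ _ _).symm
      _ = ((3*n + n * u x y + f y + f x)/6)^2 := by rw [hz, sq]
  -- the key identity for the expanded square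
  have key : (∑ x : X, ∑ y : X, (3*n + n * u x y + f y + f x)^2)
      = 10*n^4 + 18*n^2*S1 + 6*n*S2 + 2*S1^2 := by
    have expand : ∀ x y : X, (3*n + n * u x y + f y + f x)^2 =
        10*n^2 + 6*n^2 * u x y + 6*n * f x + 6*n * f y
        + 2*n * (u x y * f x) + 2*n * (u x y * f y) + 2*(f x * f y)
        + (f x)^2 + (f y)^2 := by
      intro x y
      rcases hpm x y with h | h <;> rw [h] <;> ring
    rw [Finset.sum_congr rfl fun x _ => Finset.sum_congr rfl fun y _ => expand x y]
    simp only [Finset.sum_add_distrib]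
    have E0 : ∑ x : X, ∑ _y : X, (10*n^2 : ℝ) = 10 * n^4 := by
      simp only [Finset.sum_const, Finset.card_univ, nsmul_eq_mul, ← hn]
      ring
    have E1 : ∑ x : X, ∑ y : X, 6*n^2 * u x y = 6*n^2 * S1 := by
      simp only [← Finset.mul_sum, ← hS1]
    have E2 : ∑ x : X, ∑ _y : X, 6*n * f x = 6 * n^2 * S1 := by
      simp only [Finset.sum_const, Finset.card_univ, nsmul_eq_mul, ← hn,
        ← Finset.sum_mul, ← Finset.mul_sum, hfsum]
      ring
    have E3 : ∑ _x : X, ∑ y : X, 6*n * f y = 6 * n^2 * S1 := by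
      rw [Finset.sum_comm]
      simp only [Finset.sum_const, Finset.card_univ, nsmul_eq_mul, ← hn,
        ← Finset.sum_mul, ← Finset.mul_sum, hfsum]
      ring
    have E4 : ∑ x : X, ∑ y : X, 2*n * (u x y * f x) = 2*n * S2 := by
      simp only [← Finset.mul_sum]
      rw [hS2']
      congr 1
      refine Finset.sum_congr rfl fun x _ => ?_
      rw [← Finset.sum_mul, sq]
    have E5 : ∑ x : X, ∑ y : X, 2*n * (u x y * f y) = 2*n * S2 := by
      simp only [← Finset.mul_sum]
      rw [hS2', Finset.sum_comm]
      congr 1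
      refine Finset.sum_congr rfl fun y _ => ?_
      rw [← Finset.sum_mul, hsumcol y, sq]
    have E6 : ∑ x : X, ∑ y : X, 2*(f x * f y) = 2 * S1^2 := by
      simp only [← Finset.mul_sum, ← Finset.sum_mul, hfsum]
      ring
    have E7 : ∑ x : X, ∑ _y : X, (f x)^2 = n * S2 := by
      simp only [Finset.sum_const, Finset.card_univ, nsmul_eq_mul, ← hn,
        ← Finset.sum_mul, ← Finset.mul_sum, ← hS2']
    have E8 : ∑ _x : X, ∑ y : X, (f y)^2 = n * S2 := by
      rw [Finset.sum_comm]
      simp only [Finset.sum_const, Finset.card_univ, nsmul_eq_mul, ← hn,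
        ← Finset.sum_mul, ← Finset.mul_sum, ← hS2']
    rw [E0, E1, E2, E3, E4, E5, E6, E7, E8]
    ring
  -- compute the quadruple sum
  have hT : (∑ x : X, ∑ y : X, ∑ z : X, ∑ w : X,
        ((3 + u x y + u y z + u x z) / 6) * ((3 + u x y + u y w + u x w) / 6))
      = (10*n^4 + 18*n^2*S1 + 6*n*S2 + 2*S1^2) / 36 := by
    rw [Finset.sum_congr rfl fun x _ => Finset.sum_congr rfl fun y _ => inner x y]
    rw [← key]
    rw [Finset.sum_div]
    refine Finset.sum_congr rfl fun x _ => ?_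
    rw [Finset.sum_div]
    refine Finset.sum_congr rfl fun y _ => ?_
    rw [div_pow]
    norm_num
  rw [hT]
  have hid : (10*n^4 + 18*n^2*S1 + 6*n*S2 + 2*S1^2) / 36 / n^4 - 5/18
      = (S1/n^2)/2 + (S2/n^3)/6 + (S1/n^2)^2/18 := by
    field_simp
    ring
  rw [hid]
  set A : ℝ := S1 / n^2 with hAdef
  set B : ℝ := S2 / n^3 with hBdef
  have hA' : -δ ≤ A ∧ A ≤ δ := abs_le.mp hA
  have hB' : -δ ≤ B ∧ B ≤ δ := abs_le.mp hB
  rw [abs_le]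
  constructor
  · nlinarith [sq_nonneg A, hA'.1, hB'.1]
  · nlinarith [mul_nonneg (by linarith [hA'.2] : (0:ℝ) ≤ δ - A)
      (by linarith [hA'.1] : (0:ℝ) ≤ δ + A), hA'.2, hB'.2, hδ0.le]
end
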